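/- arXiv:1601.01305 — 3 statements merged into one kernel-verified Lean document; each statement's English description precedes it below -/
import Mathlib

section
/- Characteristic equation for the positive eigenvalues in the diagonal case: let A = diag(a₁,a₂,a₃) be a diagonal real 3×3 matrix and let m̃ ∈ ℝ³ be a unit vector. Then for every λ ∈ ℝ, det(𝓜(A,m̃) − λI) = −λ·(λ² − 4π²λ[(a₂+a₃)m̃₁² + (a₁+a₃)m̃₂² + (a₁+a₂)m̃₃²] + 16π⁴[a₂a₃m̃₁² + a₁a₃m̃₂² + a₁a₂m̃₃²]). In particular, the nonzero eigenvalues λ of 𝓜(A,m̃) are precisely the roots of the quadratic λ² − 4π²λ[(a₂+a₃)m̃₁² + (a₁+a₃)m̃₂² + (a₁+a₂)m̃₃²] + 16π⁴[a₂a₃m̃₁² + a₁a₃m̃₂² + a₁a₂m̃₃²] = 0. -/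
/-!
For `A = diag d` the symbol is `4π²` times a symmetric matrix quadratic in `m`, and expanding
`det (𝓜 - λ)` gives `-λ (λ² - 4π² T λ + 16π⁴ |m|² Q)` with `T`, `Q` the two bracketed sums.
The root `λ = 0` comes from `m × m = 0`, which puts `m` in the kernel; only the constant term of
the quadratic carries `|m|² = m ⬝ᵥ m`, which is `1` for a unit vector.
-/

open Matrix Real

/-- The Fourier symbol matrix `𝓜(A,m)` with entries
`𝓜(A,m)_{lp} = 4π² (e_l × m) · A (e_p × m)`. -/
noncomputable def symbolM (A : Matrix (Fin 3) (Fin 3) ℝ) (m : Fin 3 → ℝ) :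
    Matrix (Fin 3) (Fin 3) ℝ :=
  Matrix.of fun l p =>
    4 * π ^ 2 *
      (crossProduct (Pi.single l 1) m ⬝ᵥ A.mulVec (crossProduct (Pi.single p 1) m))

theorem symbolM_diagonal (d m : Fin 3 → ℝ) :
    symbolM (diagonal d) m = (4 * π ^ 2) •
      !![d 1 * m 2 ^ 2 + d 2 * m 1 ^ 2, -(d 2 * m 0 * m 1), -(d 1 * m 0 * m 2);
         -(d 2 * m 0 * m 1), d 0 * m 2 ^ 2 + d 2 * m 0 ^ 2, -(d 0 * m 1 * m 2);
         -(d 1 * m 0 * m 2), -(d 0 * m 1 * m 2), d 0 * m 1 ^ 2 + d 1 * m 0 ^ 2] := by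
  ext l p
  fin_cases l <;> fin_cases p <;>
    simp [symbolM, crossProduct, dotProduct, mulVec, Fin.sum_univ_three] <;> ring

theorem det_symbolM_diagonal_sub_smul_one (d m : Fin 3 → ℝ) (lam : ℝ) :
    (symbolM (diagonal d) m - lam • (1 : Matrix (Fin 3) (Fin 3) ℝ)).det =
      -lam * (lam ^ 2
        - 4 * π ^ 2 * lam *
            ((d 1 + d 2) * m 0 ^ 2 + (d 0 + d 2) * m 1 ^ 2 + (d 0 + d 1) * m 2 ^ 2)
        + 16 * π ^ 4 * (m ⬝ᵥ m) *
            (d 1 * d 2 * m 0 ^ 2 + d 0 * d 2 * m 1 ^ 2 + d 0 * d 1 * m 2 ^ 2)) := by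
  rw [symbolM_diagonal, det_fin_three]
  simp only [Fin.isValue, smul_of, smul_cons, smul_eq_mul, mul_neg, smul_empty, Matrix.sub_apply, of_apply,
    cons_val', cons_val_zero, cons_val_fin_one, Matrix.smul_apply, one_apply, ↓reduceIte, mul_one, cons_val_one,
    cons_val, Fin.reduceEq, mul_zero, sub_zero, neg_mul, neg_neg, zero_ne_one, one_ne_zero, dotProduct,
    Fin.sum_univ_three]
  ring

theorem characteristic_equation_diagonal (a₁ a₂ a₃ : ℝ) (m : Fin 3 → ℝ)
    (hm : m ⬝ᵥ m = 1) :
    (∀ lam : ℝ,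
      (symbolM (Matrix.diagonal ![a₁, a₂, a₃]) m - lam • (1 : Matrix (Fin 3) (Fin 3) ℝ)).det =
        -lam * (lam ^ 2
          - 4 * π ^ 2 * lam *
              ((a₂ + a₃) * (m 0) ^ 2 + (a₁ + a₃) * (m 1) ^ 2 + (a₁ + a₂) * (m 2) ^ 2)
          + 16 * π ^ 4 *
              (a₂ * a₃ * (m 0) ^ 2 + a₁ * a₃ * (m 1) ^ 2 + a₁ * a₂ * (m 2) ^ 2))) ∧
    (∀ lam : ℝ, lam ≠ 0 →
      ((symbolM (Matrix.diagonal ![a₁, a₂, a₃]) m - lam • (1 : Matrix (Fin 3) (Fin 3) ℝ)).det = 0 ↔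
        lam ^ 2
          - 4 * π ^ 2 * lam *
              ((a₂ + a₃) * (m 0) ^ 2 + (a₁ + a₃) * (m 1) ^ 2 + (a₁ + a₂) * (m 2) ^ 2)
          + 16 * π ^ 4 *
              (a₂ * a₃ * (m 0) ^ 2 + a₁ * a₃ * (m 1) ^ 2 + a₁ * a₂ * (m 2) ^ 2) = 0)) := by
  have hdet := fun lam : ℝ => det_symbolM_diagonal_sub_smul_one ![a₁, a₂, a₃] m lam
  simp only [hm, mul_one] at hdet
  refine ⟨hdet, fun lam hlam => ?_⟩
  rw [hdet lam]
  simp [hlam]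
end

section
/- Directional case, characteristic polynomial: let A = diag(a,b,b) with a,b ∈ ℝ and let m̃ ∈ ℝ³ be a unit vector with first component m̃₁. Then for every λ ∈ ℝ, det(λI − 𝓜(A,m̃)) = λ · (λ − 4π²b) · (λ − 4π²(a(1 − m̃₁²) + b m̃₁²)); that is, the eigenvalues of 𝓜(A,m̃) are 0, 4π²b and 4π²(a(1−m̃₁²)+bm̃₁²). -/
open Matrix Real

/-!
The vector `e_l × m` is the `l`-th column of the matrix `L` of `v ↦ v × m`, so
`𝓜(A,m) = 4π² Lᵀ A L`. For `A = diag(a,b,b)` this is an explicit matrix, and expanding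
`det(λI − 𝓜)` and reducing with `m₁² + m₂² + m₃² = 1` gives the factorisation.
-/

theorem Matrix.transpose_mul_mul_apply {R : Type*} [Semiring R] {n : Type*} [Fintype n]
    (L A : Matrix n n R) (l p : n) : (Lᵀ * A * L) l p = L.col l ⬝ᵥ A *ᵥ L.col p := by
  rw [Matrix.mul_assoc]
  simp only [mul_apply, transpose_apply, col_apply, dotProduct, mulVec]

section CrossMatrix

variable {R : Type*} [CommRing R]

def crossMatrix (m : Fin 3 → R) : Matrix (Fin 3) (Fin 3) R :=
  !![0, m 2, -m 1; -m 2, 0, m 0; m 1, -m 0, 0]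

theorem crossMatrix_mulVec (m v : Fin 3 → R) : crossMatrix m *ᵥ v = v ⨯₃ m := by
  ext i
  fin_cases i <;>
    simp [crossMatrix, cross_apply, mulVec, dotProduct, Fin.sum_univ_three] <;> ring

theorem transpose_crossMatrix_mul_diagonal_mul_crossMatrix (a b : R) (m : Fin 3 → R) :
    (crossMatrix m)ᵀ * diagonal ![a, b, b] * crossMatrix m =
      !![b * (m 1 ^ 2 + m 2 ^ 2), -(b * m 0 * m 1), -(b * m 0 * m 2);
        -(b * m 0 * m 1), a * m 2 ^ 2 + b * m 0 ^ 2, -(a * m 1 * m 2);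
        -(b * m 0 * m 2), -(a * m 1 * m 2), a * m 1 ^ 2 + b * m 0 ^ 2] := by
  ext l p
  fin_cases l <;> fin_cases p <;>
    simp [crossMatrix, Matrix.mul_apply, Fin.sum_univ_three] <;> ring

theorem det_sub_smul_transpose_crossMatrix_mul_diagonal_mul_crossMatrix
    (a b c lam : R) (m : Fin 3 → R) (hm : m ⬝ᵥ m = 1) :
    (lam • (1 : Matrix (Fin 3) (Fin 3) R) -
        c • ((crossMatrix m)ᵀ * diagonal ![a, b, b] * crossMatrix m)).det =
      lam * (lam - c * b) * (lam - c * (a * (1 - m 0 ^ 2) + b * m 0 ^ 2)) := by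
  have hm' : m 0 ^ 2 + m 1 ^ 2 + m 2 ^ 2 = 1 := by
    simpa [dotProduct, Fin.sum_univ_three, sq] using hm
  rw [transpose_crossMatrix_mul_diagonal_mul_crossMatrix, det_fin_three]
  simp only [Fin.isValue, smul_of, smul_cons, smul_eq_mul, mul_neg, smul_empty, Matrix.sub_apply,
    Matrix.smul_apply, one_apply_eq, mul_one, of_apply, cons_val', cons_val_zero, cons_val_fin_one,
    cons_val_one, cons_val, ne_eq, Fin.reduceEq, not_false_eq_true, one_apply_ne, mul_zero,
    sub_neg_eq_add, zero_add, zero_ne_one, one_ne_zero]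
  linear_combination (lam * b ^ 2 * c ^ 2 * m 0 ^ 2 + lam * a * b * c ^ 2 * (1 + m 1 ^ 2 + m 2 ^ 2)
    - lam ^ 2 * b * c - lam ^ 2 * a * c) * hm'

end CrossMatrix

theorem symbolM_eq_smul_transpose_crossMatrix_mul (A : Matrix (Fin 3) (Fin 3) ℝ)
    (m : Fin 3 → ℝ) :
    symbolM A m = (4 * π ^ 2) • ((crossMatrix m)ᵀ * A * crossMatrix m) := by
  ext l p
  rw [symbolM, of_apply, Matrix.smul_apply, smul_eq_mul, transpose_mul_mul_apply,
    ← mulVec_single_one, ← mulVec_single_one, crossMatrix_mulVec, crossMatrix_mulVec]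

theorem charpoly_directional (a b : ℝ) (m : Fin 3 → ℝ) (hm : m ⬝ᵥ m = 1) (lam : ℝ) :
    (lam • (1 : Matrix (Fin 3) (Fin 3) ℝ) - symbolM (Matrix.diagonal ![a, b, b]) m).det =
      lam * (lam - 4 * π ^ 2 * b) *
        (lam - 4 * π ^ 2 * (a * (1 - (m 0) ^ 2) + b * (m 0) ^ 2)) := by
  rw [symbolM_eq_smul_transpose_crossMatrix_mul]
  exact det_sub_smul_transpose_crossMatrix_mul_diagonal_mul_crossMatrix a b _ lam m hm
end

section
/- Directional case, second eigenvector: let A = diag(a,b,b) with a,b ∈ ℝ and let m̃ ∈ ℝ³ be a unit vector. Then 𝓜(A,m̃)((e₁ × m̃) × m̃) = 4π² b ((e₁ × m̃) × m̃); i.e. (e₁ × m̃) × m̃ is an eigenvector of 𝓜(A,m̃) with eigenvalue 4π²b. -/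
/-!
Since `∑ₚ vₚ (eₚ × m) = v × m` and `(eₗ × m) · w = eₗ · (m × w)`, the symbol acts as
`v ↦ 4π² m × A (v × m)`. For `v = (e₁ × m) × m` with `|m| = 1` we get `v × m = -(e₁ × m)`, whose
first coordinate vanishes, so `diag(a, b, b)` scales it by `b`; crossing back with `m` returns `b v`.
-/

open Matrix Real

theorem symbolM_mulVec (A : Matrix (Fin 3) (Fin 3) ℝ) (m v : Fin 3 → ℝ) :
    symbolM A m *ᵥ v = (4 * π ^ 2) • (m ⨯₃ (A *ᵥ (v ⨯₃ m))) := by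
  let g : (Fin 3 → ℝ) →ₗ[ℝ] Fin 3 → ℝ :=
    crossProduct m ∘ₗ Matrix.toLin' A ∘ₗ (crossProduct (R := ℝ)).flip m
  have hsymbol : symbolM A m = (4 * π ^ 2) • LinearMap.toMatrix' g := by
    ext l p
    change 4 * π ^ 2 * (Pi.single l 1 ⨯₃ m ⬝ᵥ A *ᵥ (Pi.single p 1 ⨯₃ m)) =
      4 * π ^ 2 * (m ⨯₃ (A *ᵥ (Pi.single p 1 ⨯₃ m))) l
    rw [← single_one_dotProduct l (m ⨯₃ _), dotProduct_comm, triple_product_permutation]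
  rw [hsymbol, smul_mulVec, LinearMap.toMatrix'_mulVec]
  rfl

theorem cross_cross_eq_neg_of_dotProduct_eq_zero {R : Type*} [CommRing R] {u m : Fin 3 → R}
    (hum : u ⬝ᵥ m = 0) (hm : m ⬝ᵥ m = 1) : u ⨯₃ m ⨯₃ m = -u := by
  rw [cross_cross_eq_smul_sub_smul, hum, hm, zero_smul, one_smul, zero_sub]

theorem diagonal_mulVec_eq_smul_of_apply_zero {R : Type*} [CommSemiring R] (a b : R)
    {v : Fin 3 → R} (hv : v 0 = 0) : diagonal ![a, b, b] *ᵥ v = b • v := by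
  ext i
  fin_cases i <;> simp [mulVec_diagonal, hv]

theorem second_eigenvector_directional (a b : ℝ) (m : Fin 3 → ℝ) (hm : m ⬝ᵥ m = 1) :
    (symbolM (Matrix.diagonal ![a, b, b]) m).mulVec
        (crossProduct (crossProduct (Pi.single 0 1) m) m) =
      (4 * π ^ 2 * b) • crossProduct (crossProduct (Pi.single 0 1) m) m := by
  set u := Pi.single 0 1 ⨯₃ m
  have hum : u ⬝ᵥ m = 0 := by rw [dotProduct_comm]; exact dot_cross_self _ _
  have hu0 : u 0 = 0 := by rw [← single_one_dotProduct 0 u]; exact dot_self_cross _ _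
  rw [symbolM_mulVec, cross_cross_eq_neg_of_dotProduct_eq_zero hum hm, mulVec_neg,
    diagonal_mulVec_eq_smul_of_apply_zero a b hu0, map_neg, map_smul, ← cross_anticomm]
  simp only [smul_neg, neg_neg, smul_smul]
end
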